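/- Measure of the ergodic set: Fix ρ ∈ (1/2,1). There exist constants C = C(ρ) > 0 and C′ = C′(ρ) > 0 such that for all N ≥ 1: |ν̃_{ρ,N}(𝓔_N) − ρ(2−ρ)| ≤ C′·e^{−CN}, where ν̃_{ρ,N}(𝓔_N) = Σ_{η∈𝓔_N} (1/N) Σ_{x∈𝕋_N} W_ρ^N(τ_x η). Note that ρ(2−ρ) > 3/4 for ρ ∈ (1/2,1). -/

import Mathlib

open scoped BigOperators
open scoped Classical

namespace FEP

/-- A configuration of the facilitated exclusion process on the discrete torus `𝕋_N`. -/
abbrev Config (N : ℕ) := ZMod N → Bool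

/-- Number of particles of a configuration. -/
def numParticles {N : ℕ} [NeZero N] (η : Config N) : ℕ :=
  ∑ x : ZMod N, (if η x then 1 else 0)

/-- The ergodic set `𝓔_N`. -/
def ergodicSet (N : ℕ) [NeZero N] : Set (Config N) :=
  {η | (∀ x : ZMod N, η x = true ∨ η (x + 1) = true) ∧ N < 2 * numParticles η}

/-- The number of particles of `σ` in `Λ_ℓ = {1,…,ℓ}`. -/
def pcount (ℓ : ℕ) (σ : ℕ → Bool) : ℕ :=
  ∑ x ∈ Finset.Icc 1 ℓ, (if σ x then 1 else 0)

/-- The cylinder weight `W_ρ^ℓ(σ)` of the infinite-volume grand canonical measure `π_ρ`. -/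
noncomputable def W (ρ : ℝ) (ℓ : ℕ) (σ : ℕ → Bool) : ℝ :=
  if ∀ x ∈ Finset.Ico 1 ℓ, (σ x = true ∨ σ (x + 1) = true) then
    (1 - ρ) * ((1 - ρ) / ρ) ^ ((ℓ : ℤ) - 1 - (pcount ℓ σ : ℤ)) *
      ((2 * ρ - 1) / ρ) ^
        (2 * (pcount ℓ σ : ℤ) - (ℓ : ℤ) + 1 - (if σ 1 then 1 else 0) -
          (if σ ℓ then 1 else 0))
  else 0

/-- The translate `τ_x η` of a periodic configuration, viewed as a configuration on
`Λ_N = {1,…,N}`: `(τ_x η)(y) = η(x+y)`. -/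
def toSeg {N : ℕ} (x : ZMod N) (η : Config N) : ℕ → Bool :=
  fun y => η (x + (y : ZMod N))

/-- The translation-invariant weight `ν̃_{ρ,N}(η) = (1/N) Σ_x W_ρ^N(τ_x η)`. -/
noncomputable def nutilde (ρ : ℝ) (N : ℕ) [NeZero N] (η : Config N) : ℝ :=
  (1 / (N : ℝ)) * ∑ x : ZMod N, W ρ N (toSeg x η)

/-- The periodic grand canonical measure `ν_{ρ,N}`, the normalized restriction of `ν̃_{ρ,N}`
to the ergodic set `𝓔_N`. -/
noncomputable def nuP (ρ : ℝ) (N : ℕ) [NeZero N] (η : Config N) : ℝ :=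
  if η ∈ ergodicSet N then
    nutilde ρ N η /
      (∑ η' : Config N, if η' ∈ ergodicSet N then nutilde ρ N η' else 0)
  else 0

end FEP

/-!
Under `π_ρ` the occupation variables form a stationary Markov chain with transition matrix
`P = [[0, 1], [a, 1 - a]]`, `a = (1 - ρ)/ρ`, and stationary law `(1 - ρ, ρ)`, so `W_ρ^N` is a
product along the segment. By translation invariance, `ν̃_{ρ,N}(𝓔_N)` is the `W_ρ^N`-weight of the
ergodic configurations read from one fixed site. The configurations of the torus without two
adjacent empty sites are those whose segment has none and whose two end sites are not both empty;
their weight is `1 - (1 - ρ) P^{N-1}(0,0) = ρ(2 - ρ) - ρ(1 - ρ)(-a)^{N-1}`, because the eigenvalues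
of `P` are `1` and `-a`. Such a configuration has at least `N/2` particles, and exactly `N/2`
only if it alternates; the two alternating configurations have weight `O(a^{N/2})`. As `a < 1`,
both error terms decay like `(√a)^N`.
-/

open Finset

namespace Matrix

theorem sum_mul_prod_path_eq_sum_mul_pow_apply {α R : Type*} [Fintype α] [DecidableEq α]
    [CommSemiring R] (M : Matrix α α R) (n : ℕ) (g : α → α → R) :
    ∑ v : Fin (n + 1) → α, g (v 0) (v (Fin.last n)) * ∏ i : Fin n, M (v i.castSucc) (v i.succ) =
      ∑ s, ∑ t, g s t * (M ^ n) s t := by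
  induction n generalizing g with
  | zero =>
    rw [← (Equiv.funUnique (Fin 1) α).symm.sum_comp]
    simp [one_apply]
  | succ n ih =>
    rw [← (Fin.consEquiv fun _ => α).sum_comp, Fintype.sum_prod_type]
    simp only [Fin.consEquiv_apply, Fin.cons_zero, Fin.prod_univ_succ, Fin.castSucc_zero,
      Fin.cons_succ, ← Fin.succ_last, ← Fin.succ_castSucc]
    refine sum_congr rfl fun a _ => ?_
    have ih' := ih fun s t => M a s * g a t
    simp only [mul_assoc] at ih'
    simp only [mul_left_comm (g a _), ih', pow_succ', mul_apply, mul_sum]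
    rw [sum_comm]

end Matrix

namespace ZMod

theorem finEquiv_apply {N : ℕ} [NeZero N] (i : Fin N) : finEquiv N i = (i : ℕ) := by
  obtain ⟨n, rfl⟩ := Nat.exists_eq_add_one_of_ne_zero (NeZero.ne N)
  exact (natCast_zmod_val _).symm

theorem sum_Icc_one_add_natCast {M : Type*} [AddCommMonoid M] {N : ℕ} [NeZero N]
    (x : ZMod N) (g : ZMod N → M) : ∑ k ∈ Icc 1 N, g (x + k) = ∑ z, g z := by
  rw [← Ico_add_one_right_eq_Icc, sum_Ico_eq_sum_range, Nat.add_sub_cancel,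
    ← Fin.sum_univ_eq_sum_range (fun k => g (x + ((1 + k : ℕ) : ZMod N)))]
  refine Fintype.sum_equiv ((finEquiv N).toEquiv.trans (Equiv.addLeft (x + 1))) _ _ fun i => ?_
  simp [finEquiv_apply]

end ZMod

namespace FEP

/-- Transfer matrix of `π_ρ`: `W_ρ^ℓ` is the law of the first `ℓ` states of the stationary Markov
chain with these transition probabilities, in which an empty site is always followed by an
occupied one. -/
noncomputable def transfer (ρ : ℝ) : Matrix Bool Bool ℝ :=
  Matrix.of fun
    | false, false => 0
    | false, true => 1
    | true, false => (1 - ρ) / ρ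
    | true, true => (2 * ρ - 1) / ρ

def stationary (ρ : ℝ) (s : Bool) : ℝ := if s then ρ else 1 - ρ

theorem transfer_mem_rowStochastic {ρ : ℝ} (hρ : ρ ∈ Set.Icc (1 / 2 : ℝ) 1) :
    transfer ρ ∈ Matrix.rowStochastic ℝ Bool := by
  obtain ⟨h₁, h₂⟩ := hρ
  refine Matrix.mem_rowStochastic_iff_sum.2 ⟨?_, ?_⟩
  · rintro (_ | _) (_ | _) <;> simp only [transfer, Matrix.of_apply, le_refl, zero_le_one] <;>
      exact div_nonneg (by linarith) (by linarith)
  · rintro (_ | _) <;> simp only [transfer, Fintype.sum_bool, Matrix.of_apply]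
    · norm_num
    · field_simp
      ring

theorem transfer_pow_apply_false_false {ρ : ℝ} (hρ : ρ ∈ Set.Icc (1 / 2 : ℝ) 1) (n : ℕ) :
    (transfer ρ ^ n) false false = (1 - ρ) + ρ * (-((1 - ρ) / ρ)) ^ n := by
  have hρ₀ : ρ ≠ 0 := by linarith [hρ.1]
  induction n with
  | zero => simp
  | succ n ih =>
    have hrow := Matrix.sum_row_of_mem_rowStochastic
      (pow_mem (transfer_mem_rowStochastic hρ) n) false
    rw [Fintype.sum_bool] at hrow
    rw [pow_succ, Matrix.mul_apply, Fintype.sum_bool]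
    generalize transfer ρ ^ n = Q at ih hrow ⊢
    simp only [transfer, Matrix.of_apply]
    linear_combination (1 - ρ) / ρ * (hrow - ih) + div_mul_cancel₀ (1 - ρ) hρ₀

theorem transfer_eq_zpow {ρ : ℝ} {s t : Bool} (h : s = true ∨ t = true) :
    transfer ρ s t = ((1 - ρ) / ρ) ^ (1 - (if t then 1 else 0) : ℤ) *
      ((2 * ρ - 1) / ρ) ^ ((if s then 1 else 0) + (if t then 1 else 0) - 1 : ℤ) := by
  rcases s <;> rcases t <;> simp_all [transfer]

theorem W_one {ρ : ℝ} (hρ : ρ ≠ 1) (σ : ℕ → Bool) : W ρ 1 σ = stationary ρ (σ 1) := by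
  have hp : pcount 1 σ = if σ 1 then 1 else 0 := by rw [pcount, Icc_self, sum_singleton]
  rw [W, if_pos (by simp), hp, stationary]
  rcases σ 1
  · simp
  · simp [mul_div_cancel₀ _ (sub_ne_zero.2 hρ.symm)]

theorem W_succ {ρ : ℝ} (hρ : ρ ∈ Set.Ioo (1 / 2 : ℝ) 1) (σ : ℕ → Bool) {ℓ : ℕ} (hℓ : 1 ≤ ℓ) :
    W ρ (ℓ + 1) σ = W ρ ℓ σ * transfer ρ (σ ℓ) (σ (ℓ + 1)) := by
  obtain ⟨h₁, h₂⟩ := hρ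
  have ha : (1 - ρ) / ρ ≠ 0 := (div_pos (by linarith) (by linarith)).ne'
  have hb : (2 * ρ - 1) / ρ ≠ 0 := (div_pos (by linarith) (by linarith)).ne'
  by_cases h : ∀ x ∈ Ico 1 (ℓ + 1), σ x = true ∨ σ (x + 1) = true
  · have h' : ∀ x ∈ Ico 1 ℓ, σ x = true ∨ σ (x + 1) = true := fun x hx =>
      h x (Ico_subset_Ico_right ℓ.le_succ hx)
    have hmul (e₁ e₂ f₁ f₂ : ℤ) :
        (1 - ρ) * ((1 - ρ) / ρ) ^ (e₁ + f₁) * ((2 * ρ - 1) / ρ) ^ (e₂ + f₂) =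
          (1 - ρ) * ((1 - ρ) / ρ) ^ e₁ * ((2 * ρ - 1) / ρ) ^ e₂ *
            (((1 - ρ) / ρ) ^ f₁ * ((2 * ρ - 1) / ρ) ^ f₂) := by
      rw [zpow_add₀ ha, zpow_add₀ hb]
      ring
    rw [W, W, if_pos h, if_pos h', transfer_eq_zpow (h ℓ (by simp [hℓ])), ← hmul, pcount, pcount,
      sum_Icc_succ_top (by omega)]
    congr 2 <;> push_cast <;> ring_nf
  · obtain ⟨x, hx, hσx, hσx₁⟩ : ∃ x ∈ Ico 1 (ℓ + 1), σ x = false ∧ σ (x + 1) = false := by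
      simpa [and_assoc] using h
    rw [W, if_neg h]
    rcases (Nat.lt_succ_iff.1 (mem_Ico.1 hx).2).lt_or_eq with hxℓ | rfl
    · rw [W, if_neg fun h' => by simpa [hσx, hσx₁] using h' x (by simp_all), zero_mul]
    · simp [hσx, hσx₁, transfer]

theorem W_eq_stationary_mul_prod {ρ : ℝ} (hρ : ρ ∈ Set.Ioo (1 / 2 : ℝ) 1) (σ : ℕ → Bool)
    {ℓ : ℕ} (hℓ : 1 ≤ ℓ) :
    W ρ ℓ σ = stationary ρ (σ 1) * ∏ x ∈ Ico 1 ℓ, transfer ρ (σ x) (σ (x + 1)) := by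
  induction ℓ, hℓ using Nat.le_induction with
  | base => simp [W_one hρ.2.ne]
  | succ ℓ hℓ ih => rw [W_succ hρ σ hℓ, ih, prod_Ico_succ_top hℓ, mul_assoc]

theorem W_nonneg {ρ : ℝ} (hρ : ρ ∈ Set.Ioo (1 / 2 : ℝ) 1) (ℓ : ℕ) (σ : ℕ → Bool) :
    0 ≤ W ρ ℓ σ := by
  obtain ⟨h₁, h₂⟩ := hρ
  have : 0 < 1 - ρ := by linarith
  have : 0 < 2 * ρ - 1 := by linarith
  have : 0 < ρ := by linarith
  unfold W
  split <;> positivity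

theorem W_le {ρ : ℝ} (hρ : ρ ∈ Set.Ioo (1 / 2 : ℝ) 1) {ℓ : ℕ} {σ : ℕ → Bool}
    (h : ℓ ≤ 2 * pcount ℓ σ) :
    W ρ ℓ σ ≤ ρ ^ 2 / (2 * ρ - 1) * ((1 - ρ) / ρ) ^ ((ℓ : ℤ) - pcount ℓ σ) := by
  obtain ⟨h₁, h₂⟩ := hρ
  have ha : 0 < (1 - ρ) / ρ := div_pos (by linarith) (by linarith)
  have hb : 0 < (2 * ρ - 1) / ρ := div_pos (by linarith) (by linarith)
  by_cases hσ : ∀ x ∈ Ico 1 ℓ, σ x = true ∨ σ (x + 1) = true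
  · have hexp : (-1 : ℤ) ≤ 2 * (pcount ℓ σ : ℤ) - ℓ + 1 - (if σ 1 then 1 else 0) -
        (if σ ℓ then 1 else 0) := by
      have : (ℓ : ℤ) ≤ 2 * pcount ℓ σ := by exact_mod_cast h
      split_ifs <;> omega
    rw [W, if_pos hσ]
    calc _ ≤ (1 - ρ) * ((1 - ρ) / ρ) ^ ((ℓ : ℤ) - 1 - pcount ℓ σ) * ((2 * ρ - 1) / ρ) ^ (-1 : ℤ) :=
          mul_le_mul_of_nonneg_left
            (zpow_le_zpow_right_of_le_one₀ hb (div_le_one_of_le₀ (by linarith) (by linarith)) hexp)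
            (mul_nonneg (by linarith) (zpow_nonneg ha.le _))
      _ = ρ ^ 2 / (2 * ρ - 1) * ((1 - ρ) / ρ) ^ ((ℓ : ℤ) - pcount ℓ σ) := by
          rw [sub_right_comm, zpow_sub_one₀ ha.ne', zpow_neg_one]
          field_simp
  · rw [W, if_neg hσ]
    have : 0 < 2 * ρ - 1 := by linarith
    positivity

def NoAdjacentZeros {N : ℕ} (η : Config N) : Prop :=
  ∀ x : ZMod N, η x = true ∨ η (x + 1) = true

theorem toSeg_comp_add {N : ℕ} (x c : ZMod N) (η : Config N) :
    toSeg x (fun z => η (z + c)) = toSeg (x + c) η := by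
  funext k
  simp [toSeg, add_right_comm]

section Torus

variable {N : ℕ} [NeZero N]

theorem ite_noAdjacentZeros_W_toSeg (ρ : ℝ) (x : ZMod N) (η : Config N) :
    (if NoAdjacentZeros η then W ρ N (toSeg x η) else 0) =
      if η x = true ∨ η (x + 1) = true then W ρ N (toSeg x η) else 0 := by
  by_cases hx : η x = true ∨ η (x + 1) = true
  · rw [if_pos hx, ite_eq_left_iff, eq_comm, W]
    refine fun hη => if_neg fun hseg => hη fun y => ?_
    obtain ⟨k, hk, rfl⟩ : ∃ k < N, y = x + k :=
      ⟨(y - x).val, ZMod.val_lt _, by rw [ZMod.natCast_zmod_val, add_sub_cancel]⟩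
    rcases Nat.eq_zero_or_pos k with rfl | hk₀
    · simpa using hx
    · simpa [toSeg, add_assoc] using hseg k (mem_Ico.2 ⟨hk₀, hk⟩)
  · rw [if_neg hx, if_neg fun hη => hx (hη x)]

theorem numParticles_eq_card (η : Config N) : numParticles η = #{x | η x = true} := by
  simp [numParticles]

theorem card_zeros_add_numParticles (η : Config N) :
    #{x | η x = false} + numParticles η = N := by
  simpa [numParticles_eq_card] using
    card_filter_add_card_filter_not (s := univ) (fun x => η x = false)

theorem pcount_toSeg (x : ZMod N) (η : Config N) : pcount N (toSeg x η) = numParticles η :=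
  ZMod.sum_Icc_one_add_natCast x fun z => if η z then 1 else 0

variable {η : Config N}

theorem NoAdjacentZeros.mapsTo_add_one (h : NoAdjacentZeros η) :
    Set.MapsTo (· + 1) (({x | η x = false} : Finset (ZMod N)) : Set (ZMod N))
      ({x | η x = true} : Finset (ZMod N)) := by
  intro x hx
  simp only [coe_filter, mem_univ, true_and, Set.mem_ofPred_eq] at hx ⊢
  simpa [hx] using h x

theorem NoAdjacentZeros.le_two_mul_numParticles (h : NoAdjacentZeros η) :
    N ≤ 2 * numParticles η := by
  have := card_le_card_of_injOn _ h.mapsTo_add_one (add_left_injective 1).injOn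
  have := card_zeros_add_numParticles η
  rw [numParticles_eq_card] at *
  omega

/-- At density `1/2` the injection `x ↦ x + 1` of the empty sites into the occupied ones is onto. -/
theorem NoAdjacentZeros.add_one_eq_not (h : NoAdjacentZeros η) (hp : 2 * numParticles η ≤ N)
    (x : ZMod N) : η (x + 1) = !η x := by
  have hsurj := surjOn_of_injOn_of_card_le _ h.mapsTo_add_one (add_left_injective 1).injOn
    (by have := card_zeros_add_numParticles η; rw [numParticles_eq_card] at *; omega)
  rcases hx₁ : η (x + 1)
  · simpa [hx₁] using h x
  · obtain ⟨y, hy, hyx⟩ := hsurj (by simpa using hx₁)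
    simp_all

theorem eq_of_add_one_eq_not {η' : Config N} (h : ∀ x, η (x + 1) = !η x)
    (h' : ∀ x, η' (x + 1) = !η' x) (h₀ : η 0 = η' 0) : η = η' := by
  have hnat (k : ℕ) : η k = η' k := by
    induction k with
    | zero => simpa using h₀
    | succ k ih => simp [h, h', ih]
  exact funext fun x => by simpa using hnat x.val

theorem comp_add_mem_ergodicSet_iff (c : ZMod N) :
    (fun z => η (z + c)) ∈ ergodicSet N ↔ η ∈ ergodicSet N := by
  have hp : numParticles (fun z => η (z + c)) = numParticles η :=
    Equiv.sum_comp (Equiv.addRight c) fun z => if η z then 1 else 0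
  simp only [ergodicSet, Set.mem_ofPred_eq, hp, add_right_comm _ (1 : ZMod N) c]
  exact and_congr_left' ((Equiv.addRight c).forall_congr fun _ => Iff.rfl)

theorem sum_ergodicSet_W_toSeg (ρ : ℝ) (x y : ZMod N) :
    ∑ η : Config N, (if η ∈ ergodicSet N then W ρ N (toSeg x η) else 0) =
      ∑ η : Config N, (if η ∈ ergodicSet N then W ρ N (toSeg y η) else 0) := by
  refine Fintype.sum_bijective (fun η z => η (z + (x - y)))
    ((Equiv.addRight (x - y)).symm.arrowCongr (Equiv.refl Bool)).bijective _ _ fun η => ?_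
  rw [toSeg_comp_add, comp_add_mem_ergodicSet_iff, add_sub_cancel]

theorem sum_ergodicSet_nutilde (ρ : ℝ) (x : ZMod N) :
    ∑ η : Config N, (if η ∈ ergodicSet N then nutilde ρ N η else 0) =
      ∑ η : Config N, (if η ∈ ergodicSet N then W ρ N (toSeg x η) else 0) := by
  have hN : (N : ℝ) ≠ 0 := NeZero.ne _
  simp only [nutilde, ← mul_ite_zero, ← mul_sum, ite_sum_zero]
  rw [sum_comm, sum_congr rfl fun y _ => sum_ergodicSet_W_toSeg ρ y x, sum_const, card_univ,
    ZMod.card, nsmul_eq_mul, ← mul_assoc, one_div_mul_cancel hN, one_mul]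

theorem sum_ergodicSet_W_toSeg_eq_sub (ρ : ℝ) (x : ZMod N) :
    ∑ η : Config N, (if η ∈ ergodicSet N then W ρ N (toSeg x η) else 0) =
      ∑ η : Config N, (if NoAdjacentZeros η then W ρ N (toSeg x η) else 0) -
        ∑ η : Config N,
          (if NoAdjacentZeros η ∧ 2 * numParticles η ≤ N then W ρ N (toSeg x η) else 0) := by
  rw [← sum_sub_distrib]
  refine sum_congr rfl fun η _ => ?_
  have hmem : η ∈ ergodicSet N ↔ NoAdjacentZeros η ∧ N < 2 * numParticles η := Iff.rfl
  by_cases hη : NoAdjacentZeros η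
  · by_cases hp : 2 * numParticles η ≤ N
    · simp [hmem, hη, hp]
    · simp [hmem, hη, hp, not_le.mp hp]
  · simp [hmem, hη]

theorem W_toSeg_le_of_two_mul_numParticles_eq {ρ : ℝ} (hρ : ρ ∈ Set.Ioo (1 / 2 : ℝ) 1)
    (x : ZMod N) (hη : 2 * numParticles η = N) :
    W ρ N (toSeg x η) ≤ ρ ^ 2 / (2 * ρ - 1) * √((1 - ρ) / ρ) ^ N := by
  have hsqrt : √((1 - ρ) / ρ) ^ N = √((1 - ρ) / ρ) ^ (2 * numParticles η) := by rw [hη]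
  have hpow : ((1 - ρ) / ρ) ^ ((N : ℤ) - numParticles η) = √((1 - ρ) / ρ) ^ N := by
    rw [show (N : ℤ) - numParticles η = (numParticles η : ℕ) by omega, zpow_natCast, hsqrt,
      pow_mul, Real.sq_sqrt (div_pos (by linarith [hρ.2]) (by linarith [hρ.1])).le]
  have h := W_le hρ (σ := toSeg x η) (by rw [pcount_toSeg]; omega)
  rwa [pcount_toSeg, hpow] at h

theorem sum_nonergodic_noAdjacentZeros_W_le {ρ : ℝ} (hρ : ρ ∈ Set.Ioo (1 / 2 : ℝ) 1)
    (x : ZMod N) :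
    ∑ η : Config N, (if NoAdjacentZeros η ∧ 2 * numParticles η ≤ N then W ρ N (toSeg x η) else 0)
      ≤ 2 * (ρ ^ 2 / (2 * ρ - 1) * √((1 - ρ) / ρ) ^ N) := by
  rw [← sum_filter]
  set S : Finset (Config N) := {η | NoAdjacentZeros η ∧ 2 * numParticles η ≤ N}
  have hcard : #S ≤ 2 := by
    refine (card_le_card_of_injOn (fun η => η 0) (fun _ _ => mem_univ _) ?_).trans_eq rfl
    intro η hη η' hη' h₀
    simp only [coe_filter, mem_univ, true_and, S, Set.mem_ofPred_eq] at hη hη'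
    exact eq_of_add_one_eq_not (hη.1.add_one_eq_not hη.2) (hη'.1.add_one_eq_not hη'.2) h₀
  calc ∑ η ∈ S, W ρ N (toSeg x η) ≤ #S • (ρ ^ 2 / (2 * ρ - 1) * √((1 - ρ) / ρ) ^ N) :=
        sum_le_card_nsmul _ _ _ fun η hη => by
          simp only [mem_filter, mem_univ, true_and, S] at hη
          exact W_toSeg_le_of_two_mul_numParticles_eq hρ x
            (hη.2.antisymm hη.1.le_two_mul_numParticles)
    _ ≤ 2 * (ρ ^ 2 / (2 * ρ - 1) * √((1 - ρ) / ρ) ^ N) := by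
        rw [nsmul_eq_mul]
        have : 0 < 2 * ρ - 1 := by linarith [hρ.1]
        gcongr
        exact_mod_cast hcard

end Torus

theorem W_toSeg_neg_one {ρ : ℝ} (hρ : ρ ∈ Set.Ioo (1 / 2 : ℝ) 1) {n : ℕ} (η : Config (n + 1)) :
    W ρ (n + 1) (toSeg (-1) η) =
      stationary ρ (η 0) * ∏ i : Fin n, transfer ρ (η (i : ℕ)) (η ((i : ℕ) + 1)) := by
  rw [W_eq_stationary_mul_prod hρ _ (by omega), prod_Ico_eq_prod_range,
    Fin.prod_univ_eq_prod_range (fun k => transfer ρ (η k) (η (k + 1)))]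
  simp only [toSeg, Nat.cast_add, Nat.cast_one, neg_add_cancel, Nat.add_sub_cancel]
  exact congrArg _ (prod_congr rfl fun k _ => by ring_nf)

theorem sum_noAdjacentZeros_W {ρ : ℝ} (hρ : ρ ∈ Set.Ioo (1 / 2 : ℝ) 1) (n : ℕ) :
    ∑ η : Config (n + 1), (if NoAdjacentZeros η then W ρ (n + 1) (toSeg (-1) η) else 0) =
      ρ * (2 - ρ) - ρ * (1 - ρ) * (-((1 - ρ) / ρ)) ^ n := by
  let g (s t : Bool) : ℝ := if t = true ∨ s = true then stationary ρ s else 0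
  have hlast : ((n : ℕ) : ZMod (n + 1)) = -1 := eq_neg_of_add_eq_zero_left (ZMod.natCast_self' n)
  have hpaths :
      ∑ η : Config (n + 1), (if NoAdjacentZeros η then W ρ (n + 1) (toSeg (-1) η) else 0) =
        ∑ v : Fin (n + 1) → Bool,
          g (v 0) (v (Fin.last n)) * ∏ i : Fin n, transfer ρ (v i.castSucc) (v i.succ) := by
    refine Fintype.sum_equiv
      ((ZMod.finEquiv (n + 1)).toEquiv.symm.arrowCongr (Equiv.refl Bool)) _ _ fun η => ?_
    rw [ite_noAdjacentZeros_W_toSeg, neg_add_cancel, W_toSeg_neg_one hρ]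
    simp [g, ZMod.finEquiv_apply, hlast, or_comm]
  have hrow := Matrix.sum_row_of_mem_rowStochastic
    (pow_mem (transfer_mem_rowStochastic (Set.Ioo_subset_Icc_self hρ)) n)
  rw [hpaths, Matrix.sum_mul_prod_path_eq_sum_mul_pow_apply]
  simp only [Fintype.sum_bool] at hrow ⊢
  simp only [g, stationary, Bool.false_eq_true, or_self, or_true, or_false, ↓reduceIte, zero_mul,
    add_zero]
  linear_combination ρ * hrow true + (1 - ρ) * hrow false -
    (1 - ρ) * transfer_pow_apply_false_false (Set.Ioo_subset_Icc_self hρ) n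

theorem abs_mul_neg_pow_le {ρ : ℝ} (hρ : ρ ∈ Set.Ioo (1 / 2 : ℝ) 1) (n : ℕ) :
    |ρ * (1 - ρ) * (-((1 - ρ) / ρ)) ^ n| ≤ ρ ^ 2 * √((1 - ρ) / ρ) ^ (n + 1) := by
  obtain ⟨h₁, h₂⟩ := hρ
  have hρ₀ : 0 < ρ := by linarith
  have ha₀ : 0 < (1 - ρ) / ρ := div_pos (by linarith) hρ₀
  have ha₁ : (1 - ρ) / ρ ≤ 1 := div_le_one_of_le₀ (by linarith) (by linarith)
  rw [abs_mul, abs_pow, abs_neg, abs_of_pos ha₀, abs_of_pos (by nlinarith)]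
  calc ρ * (1 - ρ) * ((1 - ρ) / ρ) ^ n = ρ ^ 2 * ((1 - ρ) / ρ) ^ (n + 1) := by
        rw [pow_succ]
        linear_combination (-(ρ * ((1 - ρ) / ρ) ^ n)) * div_mul_cancel₀ (1 - ρ) hρ₀.ne'
    _ ≤ ρ ^ 2 * √((1 - ρ) / ρ) ^ (n + 1) := by
        gcongr
        exact Real.le_sqrt_of_sq_le (by nlinarith)

theorem abs_sum_ergodicSet_nutilde_sub_le {ρ : ℝ} (hρ : ρ ∈ Set.Ioo (1 / 2 : ℝ) 1) (N : ℕ)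
    [NeZero N] :
    |(∑ η : Config N, if η ∈ ergodicSet N then nutilde ρ N η else 0) - ρ * (2 - ρ)| ≤
      (ρ ^ 2 + 2 * (ρ ^ 2 / (2 * ρ - 1))) * √((1 - ρ) / ρ) ^ N := by
  obtain ⟨n, rfl⟩ := Nat.exists_eq_add_one_of_ne_zero (NeZero.ne N)
  have hbad₀ : 0 ≤ ∑ η : Config (n + 1),
      (if NoAdjacentZeros η ∧ 2 * numParticles η ≤ n + 1 then W ρ (n + 1) (toSeg (-1) η) else 0) :=
    sum_nonneg fun η _ => by split_ifs; exacts [W_nonneg hρ _ _, le_rfl]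
  rw [sum_ergodicSet_nutilde ρ (-1), sum_ergodicSet_W_toSeg_eq_sub, sum_noAdjacentZeros_W hρ,
    show ∀ x c b : ℝ, x - c - b - x = -(c + b) from fun _ _ _ => by ring, abs_neg]
  refine (abs_add_le _ _).trans ?_
  rw [abs_of_nonneg hbad₀]
  linarith [abs_mul_neg_pow_le hρ n, sum_nonergodic_noAdjacentZeros_W_le hρ (-1 : ZMod (n + 1))]

end FEP

namespace FEP

/-- **Measure of the ergodic set:** `ν̃_{ρ,N}(𝓔_N)` is exponentially close to `ρ(2−ρ)`,
and `ρ(2−ρ) > 3/4`. -/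
theorem measure_of_ergodic_set (ρ : ℝ) (hρ : ρ ∈ Set.Ioo (1/2 : ℝ) 1) :
    (3/4 : ℝ) < ρ * (2 - ρ) ∧
    ∃ C C' : ℝ, 0 < C ∧ 0 < C' ∧
      ∀ (N : ℕ) [NeZero N], 1 ≤ N →
        |(∑ η : Config N, if η ∈ ergodicSet N then nutilde ρ N η else 0) - ρ * (2 - ρ)|
          ≤ C' * Real.exp (-C * N) := by
  obtain ⟨h₁, h₂⟩ := hρ
  have ha : 0 < (1 - ρ) / ρ := div_pos (by linarith) (by linarith)
  have hr₀ : 0 < √((1 - ρ) / ρ) := Real.sqrt_pos.2 ha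
  have hr₁ : √((1 - ρ) / ρ) < 1 :=
    (Real.sqrt_lt' one_pos).2 (by rw [one_pow, div_lt_one (by linarith)]; linarith)
  have : 0 < 2 * ρ - 1 := by linarith
  refine ⟨by nlinarith, -Real.log √((1 - ρ) / ρ), ρ ^ 2 + 2 * (ρ ^ 2 / (2 * ρ - 1)),
    neg_pos.2 (Real.log_neg hr₀ hr₁), by positivity, fun N _ _ => ?_⟩
  rw [neg_neg, Real.exp_mul, Real.exp_log hr₀, Real.rpow_natCast]
  exact abs_sum_ergodicSet_nutilde_sub_le ⟨h₁, h₂⟩ N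

end FEP
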